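/- Let G = D_{4g} ⋉ (ℤ/2)² with r₁ acting trivially on (ℤ/2)² and r₂ swapping coordinates, a = (r₁r₂, 0), b = (r₂, e₁), c = a^{2g}b². Then the quotient of ⟨a, b⟩ by the central subgroup ⟨c⟩ is isomorphic to ⟨a, b | a^{4g} = b^4 = (ab)^2 = 1, b^2 = a^{2g}⟩, a group of order 8g. -/

import Mathlib

/-! In `S = ⟨a, b⟩` put `c = a^(2g) b²`, where `b² = (e₁ + e₂, 1)`. Since `e₁ + e₂` is fixed by the
swap, `b²` commutes with `a`; since `r^(2g)` is central in `D_{4g}` and acts trivially, `a^(2g)`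
commutes with `b`. Hence `c` is central, and `c² = a^(4g) b⁴ = 1`.

The images of `a, b` in `S/⟨c⟩` satisfy the defining relations, so the presented group maps onto
`S/⟨c⟩`. In the presented group `B` normalises `⟨A⟩` (`BAB⁻¹ = A⁻¹B⁻²`) and `B² ∈ ⟨A⟩`, so it has
at most `2 · 4g` elements. Conversely `S` maps onto `D_{4g}` with the nontrivial element `b²` in
the kernel, so `|S| ≥ 16g` and `|S/⟨c⟩| ≥ 8g`: the surjection is an isomorphism. -/

/-- Relators of `G₁ = ⟨a, b | a^(4g) = b⁴ = (ab)² = 1, b² = a^(2g)⟩`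
(`0` is `a`, `1` is `b`). -/
def g1Rels (g : ℕ) : Set (FreeGroup (Fin 2)) :=
  { (FreeGroup.of 0) ^ (4 * g),
    (FreeGroup.of 1) ^ 4,
    (FreeGroup.of 0 * FreeGroup.of 1) ^ 2,
    (FreeGroup.of 1) ^ 2 * ((FreeGroup.of 0) ^ (2 * g))⁻¹ }

/-- The Klein four group `(ℤ/2)²`, written multiplicatively. -/
abbrev V2 : Type := Multiplicative (ZMod 2) × Multiplicative (ZMod 2)

/-- `e₁ = (1,0) ∈ (ℤ/2)²`. -/
def e₁ : V2 := (Multiplicative.ofAdd 1, 1)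

open DihedralGroup

theorem DihedralGroup.closure_r_one_sr_one {n : ℕ} :
    Subgroup.closure {r 1, sr 1} = (⊤ : Subgroup (DihedralGroup n)) := by
  refine eq_top_iff.mpr fun x _ => ?_
  have hr (i : ZMod n) : r i ∈ Subgroup.closure {r 1, sr 1} := by
    obtain ⟨k, rfl⟩ := ZMod.intCast_surjective i
    exact r_one_zpow k ▸ zpow_mem (Subgroup.subset_closure (by simp)) k
  rcases x with i | i
  · exact hr i
  · rw [← add_sub_cancel 1 i, ← sr_mul_r]
    exact mul_mem (Subgroup.subset_closure (by simp)) (hr _)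

theorem Subgroup.normalClosure_singleton_eq_closure {G : Type*} [Group G] {c : G}
    (hc : c ∈ center G) : normalClosure {c} = closure {c} := by
  have hle : closure {c} ≤ center G := (closure_le _).mpr (Set.singleton_subset_iff.mpr hc)
  have : (closure {c}).Normal := ⟨fun x hx y => by
    rwa [mem_center_iff.mp (hle hx) y, mul_inv_cancel_right]⟩
  rw [← normalClosure_closure_eq_normalClosure, normalClosure_eq_self]

theorem Subgroup.mem_center_closure_of_commute {G : Type*} [Group G] {s : Set G} {z : closure s}
    (hz : ∀ x ∈ s, Commute x z) : z ∈ center (closure s) := by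
  have hle : closure s ≤ centralizer {(z : G)} :=
    (closure_le _).mpr fun x hx => mem_centralizer_singleton_iff.mpr (hz x hx)
  exact mem_center_iff.mpr fun w => Subtype.ext (mem_centralizer_singleton_iff.mp (hle w.2))

theorem MonoidHom.two_mul_card_le_card {G H : Type*} [Group G] [Group H] [Finite G]
    (f : G →* H) (hf : Function.Surjective f) (hker : f.ker ≠ ⊥) :
    2 * Nat.card H ≤ Nat.card G := by
  have hker2 : 2 ≤ Nat.card f.ker := (Subgroup.one_lt_card_iff_ne_bot _).mpr hker
  rw [← f.ker.card_mul_index, Subgroup.index_ker, f.range_eq_top.mpr hf, Subgroup.card_top]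
  exact Nat.mul_le_mul_right _ hker2

theorem mem_zpowers_or_mul_inv_mem_zpowers {G : Type*} [Group G] {x y : G}
    (hgen : Subgroup.closure {x, y} = ⊤) (hconj : y * x * y⁻¹ ∈ Subgroup.zpowers x)
    (hsq : y ^ 2 ∈ Subgroup.zpowers x) (z : G) :
    z ∈ Subgroup.zpowers x ∨ z * y⁻¹ ∈ Subgroup.zpowers x := by
  set H := Subgroup.zpowers x
  have hz : z ∈ Subgroup.closure {x, y} := hgen ▸ Subgroup.mem_top z
  induction hz using Subgroup.closure_induction_right with
  | one => exact Or.inl (one_mem H)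
  | mul_right w _ t ht ih =>
    rcases ht with rfl | rfl <;> rcases ih with ih | ih
    · exact Or.inl (mul_mem ih (Subgroup.mem_zpowers t))
    · refine Or.inr ?_
      simpa [mul_assoc] using mul_mem ih hconj
    · exact Or.inr (by simpa using ih)
    · refine Or.inl ?_
      simpa [sq, mul_assoc] using mul_mem ih hsq
  | mul_inv_cancel w _ t ht ih =>
    rcases ht with rfl | rfl <;> rcases ih with ih | ih
    · exact Or.inl (mul_mem ih (inv_mem (Subgroup.mem_zpowers t)))
    · refine Or.inr ?_
      simpa [mul_assoc] using mul_mem ih (inv_mem hconj)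
    · refine Or.inr ?_
      simpa [sq, mul_assoc] using mul_mem ih (inv_mem hsq)
    · exact Or.inl ih

theorem finite_and_card_le_two_mul_orderOf {G : Type*} [Group G] {x y : G}
    (hgen : Subgroup.closure {x, y} = ⊤) (hconj : y * x * y⁻¹ ∈ Subgroup.zpowers x)
    (hsq : y ^ 2 ∈ Subgroup.zpowers x) (hx : IsOfFinOrder x) :
    Finite G ∧ Nat.card G ≤ 2 * orderOf x := by
  have : Finite (Subgroup.zpowers x) := hx.finite_zpowers.to_subtype
  let f : Subgroup.zpowers x × Bool → G := fun p => p.1 * if p.2 then y else 1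
  have hf : Function.Surjective f := fun z => by
    rcases mem_zpowers_or_mul_inv_mem_zpowers hgen hconj hsq z with hz | hz
    · exact ⟨(⟨z, hz⟩, false), by simp [f]⟩
    · exact ⟨(⟨z * y⁻¹, hz⟩, true), by simp [f]⟩
  refine ⟨Finite.of_surjective f hf, ?_⟩
  calc Nat.card G ≤ Nat.card (Subgroup.zpowers x × Bool) := Nat.card_le_card_of_surjective f hf
    _ = 2 * orderOf x := by simp [Nat.card_prod, Nat.card_zpowers, mul_comm]

theorem lift_g1Rels_eq_one {g : ℕ} {H : Type*} [Group H] {x y : H} (hx : x ^ (4 * g) = 1)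
    (hy : y ^ 4 = 1) (hxy : (x * y) ^ 2 = 1) (hyx : y ^ 2 = x ^ (2 * g)) :
    ∀ r ∈ g1Rels g, FreeGroup.lift ![x, y] r = 1 := by
  simp [g1Rels, hx, hy, hxy, hyx]

section PresentedGroup

variable (g : ℕ)

local notation "A" => (PresentedGroup.of 0 : PresentedGroup (g1Rels g))
local notation "B" => (PresentedGroup.of 1 : PresentedGroup (g1Rels g))

theorem g1Rels_of_zero_pow : A ^ (4 * g) = 1 :=
  (map_pow _ _ _).symm.trans (PresentedGroup.one_of_mem (by simp [g1Rels]))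

theorem g1Rels_of_mul_of_sq : (A * B) ^ 2 = 1 :=
  (map_pow _ (_ * _) _).symm.trans (PresentedGroup.one_of_mem (by simp [g1Rels]))

theorem g1Rels_of_one_sq : B ^ 2 = A ^ (2 * g) :=
  (map_pow _ _ _).symm.trans <| (PresentedGroup.mk_eq_mk_of_mul_inv_mem (by simp [g1Rels])).trans
    (map_pow _ _ _)

theorem finite_and_card_presentedGroup_g1Rels_le (hg : g ≠ 0) :
    Finite (PresentedGroup (g1Rels g)) ∧ Nat.card (PresentedGroup (g1Rels g)) ≤ 8 * g := by
  have hgen : Subgroup.closure {A, B} = ⊤ := by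
    rw [← PresentedGroup.closure_range_of]
    congr 1
    ext
    simp [Fin.exists_fin_two, eq_comm]
  have hconj : B * A * B⁻¹ = A⁻¹ * (A ^ (2 * g))⁻¹ :=
    calc B * A * B⁻¹ = A⁻¹ * (A * B) ^ 2 * (B ^ 2)⁻¹ := by simp only [sq]; group
      _ = A⁻¹ * (A ^ (2 * g))⁻¹ := by rw [g1Rels_of_mul_of_sq, mul_one, g1Rels_of_one_sq]
  have hpos : 0 < 4 * g := by omega
  obtain ⟨hfin, hcard⟩ := finite_and_card_le_two_mul_orderOf hgen
    (hconj ▸ mul_mem (inv_mem (Subgroup.mem_zpowers A)) (inv_mem (Subgroup.npow_mem_zpowers A _)))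
    (g1Rels_of_one_sq g ▸ Subgroup.npow_mem_zpowers A _)
    (isOfFinOrder_iff_pow_eq_one.mpr ⟨4 * g, hpos, g1Rels_of_zero_pow g⟩)
  refine ⟨hfin, hcard.trans ?_⟩
  have := orderOf_le_of_pow_eq_one hpos (g1Rels_of_zero_pow g)
  omega

end PresentedGroup

theorem SemidirectProduct.mk_mul_mk {N G : Type*} [Group N] [Group G] {φ : G →* MulAut N}
    (v w : N) (d e : G) : (⟨v, d⟩ * ⟨w, e⟩ : N ⋊[φ] G) = ⟨v * φ d w, d * e⟩ :=
  rfl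

instance SemidirectProduct.finite {N G : Type*} [Group N] [Group G] [Finite N] [Finite G]
    {φ : G →* MulAut N} : Finite (N ⋊[φ] G) :=
  Finite.of_equiv _ SemidirectProduct.equivProd.symm

theorem V2.mul_self : ∀ v : V2, v * v = 1 := by
  decide

section SemidirectProduct

open SemidirectProduct

variable {n : ℕ} (φ : DihedralGroup n →* MulAut V2)

def genA : V2 ⋊[φ] DihedralGroup n := ⟨1, r 1⟩

def genB : V2 ⋊[φ] DihedralGroup n := ⟨e₁, sr 1⟩

theorem genA_pow (k : ℕ) : genA φ ^ k = ⟨1, r k⟩ := by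
  induction k with
  | zero => rw [pow_zero, Nat.cast_zero, r_zero]; rfl
  | succ k ih => rw [pow_succ, ih, genA, mk_mul_mk, map_one, mul_one, r_mul_r, Nat.cast_succ]

theorem genA_pow_n : genA φ ^ n = 1 := by
  rw [genA_pow, ZMod.natCast_self, r_zero]
  rfl

variable {φ} (h0 : φ (sr 0) = 1) (h1 : φ (sr 1) = MulEquiv.prodComm)
include h0 h1

theorem map_r_one_eq_prodComm : φ (r 1) = MulEquiv.prodComm := by
  rw [← sub_zero 1, ← sr_mul_sr, map_mul, h0, h1, one_mul]

theorem map_r_two_mul_eq_one (k : ℕ) : φ (r (2 * k : ℕ)) = 1 := by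
  have : (MulEquiv.prodComm : MulAut V2) ^ 2 = 1 := by ext <;> rfl
  rw [← r_one_pow, pow_mul, map_pow, map_pow, map_r_one_eq_prodComm h0 h1, this, one_pow]

omit h0 in
theorem genB_sq : genB φ ^ 2 = ⟨e₁ * MulEquiv.prodComm e₁, 1⟩ := by
  rw [sq, genB, mk_mul_mk, h1, sr_mul_self]

omit h0 in
theorem genB_sq_ne_one : genB φ ^ 2 ≠ 1 := by
  rw [genB_sq h1]
  exact fun h => (show e₁ * MulEquiv.prodComm e₁ ≠ 1 by decide) (congrArg SemidirectProduct.left h)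

omit h0 in
theorem genB_pow_four : genB φ ^ 4 = 1 := by
  rw [show 4 = 2 * 2 by rfl, pow_mul, genB_sq h1, sq, mk_mul_mk, map_one, MulAut.one_apply]
  exact SemidirectProduct.ext (V2.mul_self _) (mul_one 1)

theorem genA_mul_genB_sq : (genA φ * genB φ) ^ 2 = 1 := by
  rw [genA, genB, mk_mul_mk, map_r_one_eq_prodComm h0 h1, one_mul, r_mul_sr, sub_self, sq,
    mk_mul_mk, h0, sr_mul_self, MulAut.one_apply]
  exact SemidirectProduct.ext (V2.mul_self _) rfl

theorem commute_genB_sq_genA : Commute (genB φ ^ 2) (genA φ) := by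
  rw [commute_iff_eq, genB_sq h1, genA, mk_mul_mk, mk_mul_mk, map_r_one_eq_prodComm h0 h1, map_one,
    mul_one, one_mul, one_mul, mul_one]
  simp [mul_comm]

end SemidirectProduct

section Subgroup

variable {n : ℕ} (φ : DihedralGroup n →* MulAut V2)

abbrev wimanSubgroup : Subgroup (V2 ⋊[φ] DihedralGroup n) := Subgroup.closure {genA φ, genB φ}

def subA : wimanSubgroup φ := ⟨genA φ, Subgroup.subset_closure (by simp)⟩

def subB : wimanSubgroup φ := ⟨genB φ, Subgroup.subset_closure (by simp)⟩

theorem closure_subA_subB : Subgroup.closure {subA φ, subB φ} = ⊤ := by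
  convert Subgroup.closure_closure_coe_preimage (k := {genA φ, genB φ}) using 2
  ext x
  simp [subA, subB, Subtype.ext_iff]

variable {φ} in
theorem four_mul_le_card_wimanSubgroup [NeZero n] (h1 : φ (sr 1) = MulEquiv.prodComm) :
    4 * n ≤ Nat.card (wimanSubgroup φ) := by
  let f := SemidirectProduct.rightHom.comp (wimanSubgroup φ).subtype
  have hf : Function.Surjective f := by
    rw [← MonoidHom.range_eq_top, MonoidHom.range_comp, Subgroup.range_subtype,
      MonoidHom.map_closure, Set.image_pair]
    exact closure_r_one_sr_one
  have hker : f.ker ≠ ⊥ := by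
    refine (Subgroup.ne_bot_iff_exists_ne_one).mpr ⟨⟨subB φ ^ 2, ?_⟩, ?_⟩
    · simp [f, subB, genB_sq h1]
    · exact fun h => genB_sq_ne_one h1
        (congrArg (fun x : f.ker => (x : V2 ⋊[φ] DihedralGroup n)) h)
  have := f.two_mul_card_le_card hf hker
  rwa [nat_card, ← mul_assoc] at this

end Subgroup

section Quotient

variable {g : ℕ} {φ : DihedralGroup (4 * g) →* MulAut V2}

variable (φ) in
def wimanCentral : wimanSubgroup φ := subA φ ^ (2 * g) * subB φ ^ 2

variable (h0 : φ (sr 0) = 1) (h1 : φ (sr 1) = MulEquiv.prodComm)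
include h0 h1

theorem commute_genA_pow_genB : Commute (genA φ ^ (2 * g)) (genB φ) := by
  have h4g : ((2 * g : ℕ) : ZMod (4 * g)) + (2 * g : ℕ) = 0 := by
    rw [← Nat.cast_add, ← two_mul, ← mul_assoc, ZMod.natCast_self]
  rw [commute_iff_eq, genA_pow]
  ext : 1
  · show 1 * φ (r _) e₁ = e₁ * φ (sr 1) 1
    rw [map_r_two_mul_eq_one h0 h1, map_one, one_mul, mul_one, MulAut.one_apply]
  · show r _ * sr 1 = sr 1 * r _
    rw [r_mul_sr, sr_mul_r, sr.injEq]
    linear_combination -h4g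

theorem wimanCentral_mem_center : wimanCentral φ ∈ Subgroup.center (wimanSubgroup φ) := by
  refine Subgroup.mem_center_closure_of_commute ?_
  rintro x (rfl | rfl)
  · exact ((Commute.refl _).pow_right _).mul_right (commute_genB_sq_genA h0 h1).symm
  · exact (commute_genA_pow_genB h0 h1).symm.mul_right ((Commute.refl _).pow_right _)

theorem wimanCentral_sq : wimanCentral φ ^ 2 = 1 := by
  apply Subtype.ext
  change (genA φ ^ (2 * g) * genB φ ^ 2) ^ 2 = 1
  rw [((commute_genB_sq_genA h0 h1).pow_right _).symm.mul_pow, ← pow_mul, ← pow_mul,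
    show 2 * g * 2 = 4 * g by ring, genA_pow_n, genB_pow_four h1, one_mul]

theorem eight_mul_le_card_quotient_wimanCentral (hg : g ≠ 0) :
    8 * g ≤ Nat.card (wimanSubgroup φ ⧸ Subgroup.normalClosure {wimanCentral φ}) := by
  have : NeZero (4 * g) := ⟨by omega⟩
  have hN : Nat.card (Subgroup.normalClosure {wimanCentral φ}) ≤ 2 := by
    rw [Subgroup.normalClosure_singleton_eq_closure (wimanCentral_mem_center h0 h1),
      ← Subgroup.zpowers_eq_closure, Nat.card_zpowers]
    exact orderOf_le_of_pow_eq_one two_pos (wimanCentral_sq h0 h1)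
  set N := Subgroup.normalClosure {wimanCentral φ}
  have hS : 4 * (4 * g) ≤ Nat.card (wimanSubgroup φ ⧸ N) * Nat.card N :=
    (four_mul_le_card_wimanSubgroup h1).trans_eq N.card_eq_card_quotient_mul_card_subgroup
  have := Nat.mul_le_mul_left (Nat.card (wimanSubgroup φ ⧸ N)) hN
  omega

theorem exists_surjective_presentedGroup_g1Rels :
    ∃ ψ : PresentedGroup (g1Rels g) →* wimanSubgroup φ ⧸ Subgroup.normalClosure {wimanCentral φ},
      Function.Surjective ψ := by
  set N := Subgroup.normalClosure {wimanCentral φ}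
  let π := QuotientGroup.mk' N
  have hA : π (subA φ) ^ (4 * g) = 1 := by
    rw [← map_pow, show subA φ ^ (4 * g) = 1 from Subtype.ext (genA_pow_n φ), map_one]
  have hB : π (subB φ) ^ 4 = 1 := by
    rw [← map_pow, show subB φ ^ 4 = 1 from Subtype.ext (genB_pow_four h1), map_one]
  have hAB : (π (subA φ) * π (subB φ)) ^ 2 = 1 := by
    rw [← map_mul, ← map_pow,
      show (subA φ * subB φ) ^ 2 = 1 from Subtype.ext (genA_mul_genB_sq h0 h1), map_one]
  have hBA : π (subB φ) ^ 2 = π (subA φ) ^ (2 * g) := by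
    have hc : π (subA φ) ^ (2 * g) * π (subB φ) ^ 2 = 1 := by
      rw [← map_pow, ← map_pow, ← map_mul]
      exact (QuotientGroup.eq_one_iff _).mpr (Subgroup.subset_normalClosure rfl)
    rw [eq_inv_of_mul_eq_one_right hc]
    refine inv_eq_of_mul_eq_one_right ?_
    rw [← pow_add, ← two_mul, ← mul_assoc, show 2 * 2 = 4 by rfl, hA]
  let ψ := PresentedGroup.toGroup (lift_g1Rels_eq_one hA hB hAB hBA)
  refine ⟨ψ, MonoidHom.range_eq_top.mp (eq_top_iff.mpr ?_)⟩
  calc ⊤ = (⊤ : Subgroup (wimanSubgroup φ)).map π :=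
        (Subgroup.map_top_of_surjective π (QuotientGroup.mk'_surjective N)).symm
    _ = Subgroup.closure {π (subA φ), π (subB φ)} := by
        rw [← closure_subA_subB, MonoidHom.map_closure, Set.image_pair]
    _ ≤ ψ.range := by
        rw [Subgroup.closure_le]
        rintro _ (rfl | rfl)
        exacts [⟨PresentedGroup.of 0, PresentedGroup.toGroup.of _⟩,
          ⟨PresentedGroup.of 1, PresentedGroup.toGroup.of _⟩]

end Quotient

/-- Let `G = D_{4g} ⋉ (ℤ/2)²` (with `r₁ = sr 0` acting trivially and `r₂ = sr 1`
swapping the coordinates), `a = (r₁r₂, 0)`, `b = (r₂, e₁)` and `c = a^(2g) b²`.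
Then `c` is central in `⟨a, b⟩`, and the quotient of `⟨a, b⟩` by the (normal)
subgroup generated by `c` is isomorphic to
`⟨a, b | a^(4g) = b⁴ = (ab)² = 1, b² = a^(2g)⟩`, a group of order `8g`. -/
theorem wiman_quotient_presentation (g : ℕ) (hg : 2 ≤ g)
    (φ : DihedralGroup (4 * g) →* MulAut V2)
    (h0 : φ (DihedralGroup.sr 0) = 1)
    (h1 : φ (DihedralGroup.sr 1) = (MulEquiv.prodComm : V2 ≃* V2)) :
    let a : V2 ⋊[φ] DihedralGroup (4 * g) := ⟨1, DihedralGroup.r 1⟩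
    let b : V2 ⋊[φ] DihedralGroup (4 * g) := ⟨e₁, DihedralGroup.sr 1⟩
    let S := Subgroup.closure {a, b}
    ∃ c : S, (c : V2 ⋊[φ] DihedralGroup (4 * g)) = a ^ (2 * g) * b ^ 2 ∧
      (∀ s : S, c * s = s * c) ∧
      Subgroup.normalClosure ({c} : Set S) = Subgroup.closure {c} ∧
      Nat.card (S ⧸ Subgroup.normalClosure ({c} : Set S)) = 8 * g ∧
      Nonempty ((S ⧸ Subgroup.normalClosure ({c} : Set S)) ≃*
        PresentedGroup (g1Rels g)) := by
  intro a b S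
  have hc := wimanCentral_mem_center h0 h1
  obtain ⟨hfin, hP⟩ := finite_and_card_presentedGroup_g1Rels_le g (by omega)
  obtain ⟨ψ, hψ⟩ := exists_surjective_presentedGroup_g1Rels h0 h1
  have hcard : Nat.card (S ⧸ Subgroup.normalClosure {wimanCentral φ}) = 8 * g :=
    le_antisymm ((Nat.card_le_card_of_surjective ψ hψ).trans hP)
      (eight_mul_le_card_quotient_wimanCentral h0 h1 (by omega))
  refine ⟨wimanCentral φ, rfl, fun s => (Subgroup.mem_center_iff.mp hc s).symm,
    Subgroup.normalClosure_singleton_eq_closure hc, hcard, ?_⟩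
  exact ⟨(MulEquiv.ofBijective ψ (hψ.bijective_of_nat_card_le (hP.trans hcard.ge))).symm⟩
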